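/- arXiv:1402.5256 — 5 statements merged into one kernel-verified Lean document; each statement's English description precedes it below -/
import Mathlib

section
/- Let a, b > 0 with a ≠ b, U₀ = diag(a,b), U₁ = diag(b,a). If Q ∈ SO(2) and v ∈ ℝ² is a nonzero vector with (U₀ - Q U₁) v = 0, then v₁ = v₂ or v₁ = -v₂. In other words, the only possible twin normals (kernel directions of rank-one connections between the wells) are spanned by (1,1) or (1,-1). -/
open Matrix

def SO2 (Q : Matrix (Fin 2) (Fin 2) ℝ) : Prop := Qᵀ * Q = 1 ∧ Q.det = 1

theorem twin_normals (a b : ℝ) (ha : 0 < a) (hb : 0 < b) (hab : a ≠ b)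
    (Q : Matrix (Fin 2) (Fin 2) ℝ) (hQ : SO2 Q)
    (v : Fin 2 → ℝ) (hv : v ≠ 0)
    (hker : (!![a, 0; 0, b] - Q * !![b, 0; 0, a]).mulVec v = 0) :
    v 0 = v 1 ∨ v 0 = - v 1 := by
  obtain ⟨hO, _⟩ := hQ
  have h00 := congrFun (congrFun hO 0) 0
  have h11 := congrFun (congrFun hO 1) 1
  have h01 := congrFun (congrFun hO 0) 1
  have hk0 := congrFun hker 0
  have hk1 := congrFun hker 1
  simp [Matrix.mul_apply, Matrix.mulVec, dotProduct, Fin.sum_univ_two,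
    Matrix.one_apply, Matrix.transpose_apply, Matrix.sub_apply] at h00 h01 h11 hk0 hk1
  -- a v0 = Q00 b v0 + Q01 a v1 ; b v1 = Q10 b v0 + Q11 a v1
  have hsq : a^2 * (v 0)^2 + b^2 * (v 1)^2 = b^2 * (v 0)^2 + a^2 * (v 1)^2 := by
    linear_combination (a * v 0 + Q 0 0 * b * v 0 + Q 0 1 * a * v 1) * hk0 +
      (b * v 1 + Q 1 0 * b * v 0 + Q 1 1 * a * v 1) * hk1 +
      b ^ 2 * (v 0) ^ 2 * h00 + a ^ 2 * (v 1) ^ 2 * h11 + 2 * a * b * v 0 * v 1 * h01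
  have hfac : (a - b) * (a + b) * ((v 0 - v 1) * (v 0 + v 1)) = 0 := by ring_nf; nlinarith [hsq]
  have hab' : (a - b) * (a + b) ≠ 0 := by
    have : a + b > 0 := by linarith
    exact mul_ne_zero (sub_ne_zero.mpr hab) (ne_of_gt this)
  have := (mul_eq_zero.mp hfac).resolve_left hab'
  rcases mul_eq_zero.mp this with h | h
  · left; linarith
  · right; linarith
end

section
/- Let a, b > 0, U₀ = diag(a,b), U₁ = diag(b,a), and let Q ∈ SO(2) be the rotation with entries cos γ = 2ab/(a²+b²), sin γ = (a²-b²)/(a²+b²). Then U₀ - Q U₁ = ((a²-b²)/(a²+b²)) · (a, -b)ᵀ ⊗ (1, 1), i.e., U₀ - QU₁ equals the outer product of the column vector ((a²-b²)/(a²+b²))·(a,-b)ᵀ with the row vector (1,1). In particular U₀ - QU₁ has rank at most one. -/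
open Matrix

theorem diag_sub_rotation_mul_diag_eq_vecMulVec {K : Type*} [Field K] {a b : K}
    (h : a ^ 2 + b ^ 2 ≠ 0) :
    !![a, 0; 0, b] -
        !![2 * a * b / (a ^ 2 + b ^ 2), -((a ^ 2 - b ^ 2) / (a ^ 2 + b ^ 2));
           (a ^ 2 - b ^ 2) / (a ^ 2 + b ^ 2), 2 * a * b / (a ^ 2 + b ^ 2)] * !![b, 0; 0, a]
      = vecMulVec (((a ^ 2 - b ^ 2) / (a ^ 2 + b ^ 2)) • ![a, -b]) ![1, 1] := by
  ext i j
  fin_cases i <;> fin_cases j <;> simp [vecMulVec_apply] <;> field_simp <;> ring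

theorem rank_one_connection_formula (a b : ℝ) (ha : 0 < a) (hb : 0 < b) :
    (!![a, 0; 0, b] -
        !![2 * a * b / (a ^ 2 + b ^ 2), -((a ^ 2 - b ^ 2) / (a ^ 2 + b ^ 2));
           (a ^ 2 - b ^ 2) / (a ^ 2 + b ^ 2), 2 * a * b / (a ^ 2 + b ^ 2)] * !![b, 0; 0, a])
      = vecMulVec (((a ^ 2 - b ^ 2) / (a ^ 2 + b ^ 2)) • ![a, -b]) ![1, 1] ∧
    (!![a, 0; 0, b] -
        !![2 * a * b / (a ^ 2 + b ^ 2), -((a ^ 2 - b ^ 2) / (a ^ 2 + b ^ 2));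
           (a ^ 2 - b ^ 2) / (a ^ 2 + b ^ 2), 2 * a * b / (a ^ 2 + b ^ 2)] * !![b, 0; 0, a]).rank ≤ 1 := by
  have h := diag_sub_rotation_mul_diag_eq_vecMulVec (a := a) (b := b) (by positivity)
  exact ⟨h, h ▸ rank_vecMulVec_le _ _⟩
end

section
/- Let a, b > 0 with a ≠ b, U₀ = diag(a,b), U₁ = diag(b,a). The set {Q ∈ SO(2) : rank(U₀ - Q U₁) = 1} has exactly two elements. That is, U₀ is rank-one connected to exactly two matrices in the well SO(2)U₁. -/
/-!
Every `Q ∈ SO(2)` is a rotation `!![c, -s; s, c]` with `c² + s² = 1`, since `Qᵀ = Q⁻¹ = adj Q`.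
For such `Q` the matrix `U₀ - Q U₁` is never zero when `a² ≠ b²` (its diagonal would force
`a² = c a b = b²`), so it has rank one exactly when its determinant `2ab - c (a² + b²)` vanishes.
This pins down `c = 2ab / (a² + b²)`, leaving the two sines `s = ±(a² - b²) / (a² + b²)`,
which differ because `a ≠ b`.
-/

open Matrix

namespace Matrix

variable {m n K : Type*} [Fintype n] [Field K]

theorem rank_eq_zero_iff (M : Matrix m n K) : M.rank = 0 ↔ M = 0 := by
  classical
  rw [rank, Submodule.finrank_eq_zero, LinearMap.range_eq_bot, ← toLin'_apply',
    LinearEquiv.map_eq_zero_iff]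

theorem rank_lt_card_iff_det_eq_zero [DecidableEq n] (M : Matrix n n K) :
    M.rank < Fintype.card n ↔ M.det = 0 := by
  refine ⟨fun h => by_contra fun hdet => h.ne (rank_of_det_ne_zero hdet), fun hdet => ?_⟩
  obtain ⟨v, hv, hMv⟩ := exists_mulVec_eq_zero_iff.mpr hdet
  have hker : 0 < Module.finrank K (LinearMap.ker M.mulVecLin) :=
    Module.finrank_pos_iff_exists_ne_zero.mpr ⟨⟨v, hMv⟩, fun h => hv (congrArg Subtype.val h)⟩
  have := LinearMap.finrank_range_add_finrank_ker M.mulVecLin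
  rw [Module.finrank_fintype_fun_eq_card] at this
  rw [rank]
  omega

theorem rank_eq_one_iff_of_fin_two (M : Matrix (Fin 2) (Fin 2) K) :
    M.rank = 1 ↔ M ≠ 0 ∧ M.det = 0 := by
  have := rank_le_card_width M
  rw [Fintype.card_fin] at this
  rw [ne_eq, ← rank_eq_zero_iff M, ← rank_lt_card_iff_det_eq_zero M, Fintype.card_fin]
  omega

end Matrix

theorem SO2_iff_transpose_eq_adjugate {Q : Matrix (Fin 2) (Fin 2) ℝ} :
    SO2 Q ↔ Qᵀ = adjugate Q ∧ Q.det = 1 := by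
  refine and_congr_left fun hdet => ⟨fun horth => ?_, fun hadj => ?_⟩
  · rw [← inv_eq_left_inv horth, inv_def, hdet, Ring.inverse_one, one_smul]
  · rw [hadj, adjugate_mul, hdet, one_smul]

theorem SO2_iff_exists_rotation {Q : Matrix (Fin 2) (Fin 2) ℝ} :
    SO2 Q ↔ ∃ c s : ℝ, c ^ 2 + s ^ 2 = 1 ∧ Q = !![c, -s; s, c] := by
  rw [SO2_iff_transpose_eq_adjugate]
  constructor
  · obtain ⟨p, q, r, t, rfl⟩ : ∃ p q r t, Q = !![p, q; r, t] := ⟨_, _, _, _, eta_fin_two Q⟩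
    rw [adjugate_fin_two_of, det_fin_two_of, ← Matrix.ext_iff]
    rintro ⟨hadj, hdet⟩
    have htp : p = t := by simpa using hadj 0 0
    have hrq : r = -q := by simpa using hadj 0 1
    subst htp hrq
    exact ⟨p, -q, by linear_combination hdet, by simp⟩
  · rintro ⟨c, s, hcs, rfl⟩
    rw [adjugate_fin_two_of, det_fin_two_of]
    refine ⟨?_, by linear_combination hcs⟩
    ext i j
    fin_cases i <;> fin_cases j <;> simp

section

variable {R : Type*} [CommRing R] (a b c s : R)

theorem det_diag_sub_rotation_mul_diag :
    (!![a, 0; 0, b] - !![c, -s; s, c] * !![b, 0; 0, a]).det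
      = a * b * (c ^ 2 + s ^ 2 + 1) - c * (a ^ 2 + b ^ 2) := by
  simp [det_fin_two]
  ring

theorem diag_sub_rotation_mul_diag_ne_zero (hab : a ^ 2 ≠ b ^ 2) :
    !![a, 0; 0, b] - !![c, -s; s, c] * !![b, 0; 0, a] ≠ 0 := by
  intro h
  have h00 : a - c * b = 0 := by simpa using congrFun₂ h 0 0
  have h11 : b - c * a = 0 := by simpa using congrFun₂ h 1 1
  exact hab (by linear_combination a * h00 - b * h11)

end

theorem rank_diag_sub_rotation_mul_diag_eq_one_iff {K : Type*} [Field K] {a b c s : K}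
    (hab : a ^ 2 ≠ b ^ 2) (hcs : c ^ 2 + s ^ 2 = 1) :
    (!![a, 0; 0, b] - !![c, -s; s, c] * !![b, 0; 0, a]).rank = 1 ↔
      c * (a ^ 2 + b ^ 2) = 2 * a * b := by
  rw [rank_eq_one_iff_of_fin_two, det_diag_sub_rotation_mul_diag, hcs,
    and_iff_right (diag_sub_rotation_mul_diag_ne_zero a b c s hab)]
  exact ⟨fun h => by linear_combination -h, fun h => by linear_combination -h⟩

theorem setOf_SO2_rank_one_eq {a b c s : ℝ} (hab : a ^ 2 ≠ b ^ 2)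
    (hc : c * (a ^ 2 + b ^ 2) = 2 * a * b) (hs : s * (a ^ 2 + b ^ 2) = a ^ 2 - b ^ 2) :
    {Q : Matrix (Fin 2) (Fin 2) ℝ |
        SO2 Q ∧ (!![a, 0; 0, b] - Q * !![b, 0; 0, a]).rank = 1} =
      {!![c, -s; s, c], !![c, s; -s, c]} := by
  have hsum : a ^ 2 + b ^ 2 ≠ 0 := fun h => hab (by nlinarith [sq_nonneg a, sq_nonneg b])
  have hcs : c ^ 2 + s ^ 2 = 1 := by
    apply mul_right_cancel₀ (pow_ne_zero 2 hsum)
    linear_combination (c * (a ^ 2 + b ^ 2) + 2 * a * b) * hc +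
      (s * (a ^ 2 + b ^ 2) + a ^ 2 - b ^ 2) * hs
  ext Q
  simp only [Set.mem_ofPred_eq, Set.mem_insert_iff, Set.mem_singleton_iff, SO2_iff_exists_rotation]
  constructor
  · rintro ⟨⟨c', s', hcs', rfl⟩, hrank⟩
    rw [rank_diag_sub_rotation_mul_diag_eq_one_iff hab hcs'] at hrank
    obtain rfl : c' = c := mul_right_cancel₀ hsum (hrank.trans hc.symm)
    have hss : s' ^ 2 = s ^ 2 := by linear_combination hcs' - hcs
    rcases sq_eq_sq_iff_eq_or_eq_neg.mp hss with rfl | rfl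
    · exact Or.inl rfl
    · exact Or.inr (by simp)
  · rintro (rfl | rfl)
    · exact ⟨⟨c, s, hcs, rfl⟩, (rank_diag_sub_rotation_mul_diag_eq_one_iff hab hcs).mpr hc⟩
    · have hcs' : c ^ 2 + (-s) ^ 2 = 1 := by rw [neg_sq, hcs]
      refine ⟨⟨c, -s, hcs', by simp⟩, ?_⟩
      simpa using (rank_diag_sub_rotation_mul_diag_eq_one_iff hab hcs').mpr hc

theorem exactly_two_rank_one_connections (a b : ℝ) (ha : 0 < a) (hb : 0 < b) (hab : a ≠ b) :
    {Q : Matrix (Fin 2) (Fin 2) ℝ |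
        SO2 Q ∧ (!![a, 0; 0, b] - Q * !![b, 0; 0, a]).rank = 1}.ncard = 2 := by
  have hsq : a ^ 2 ≠ b ^ 2 := fun h => hab ((sq_eq_sq₀ ha.le hb.le).mp h)
  have hsum : a ^ 2 + b ^ 2 ≠ 0 := by positivity
  have hs : (a ^ 2 - b ^ 2) / (a ^ 2 + b ^ 2) ≠ 0 := div_ne_zero (sub_ne_zero.mpr hsq) hsum
  rw [setOf_SO2_rank_one_eq hsq (div_mul_cancel₀ (2 * a * b) hsum)
    (div_mul_cancel₀ (a ^ 2 - b ^ 2) hsum)]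
  refine Set.ncard_pair fun h => hs ?_
  have h10 := congrFun₂ h 1 0
  simp only [of_apply, cons_val', cons_val_one, cons_val_zero, empty_val',
    cons_val_fin_one] at h10
  linarith
end

section
/- Let a, b > 0, U₀ = diag(a,b), U₁ = diag(b,a), Q ∈ SO(2) the rotation with cos γ = 2ab/(a²+b²), sin γ = (a²-b²)/(a²+b²), and for λ ∈ [0,1] set F_λ = (1-λ)U₀ + λQU₁. Then: (i) F_λ·(1,-1)ᵀ = (a,-b)ᵀ for every λ; and (ii) if additionally ab = 1, then det F_λ = 1 for every λ ∈ [0,1]. -/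
open Matrix

theorem F_lambda_properties (a b : ℝ) (ha : 0 < a) (hb : 0 < b) :
    (∀ lam : ℝ,
      (((1 - lam) • !![a, 0; 0, b] +
          lam • (!![2 * a * b / (a ^ 2 + b ^ 2), -((a ^ 2 - b ^ 2) / (a ^ 2 + b ^ 2));
                    (a ^ 2 - b ^ 2) / (a ^ 2 + b ^ 2), 2 * a * b / (a ^ 2 + b ^ 2)] *
                  !![b, 0; 0, a]))).mulVec ![1, -1] = ![a, -b]) ∧
    (a * b = 1 → ∀ lam ∈ Set.Icc (0 : ℝ) 1,
      ((1 - lam) • !![a, 0; 0, b] +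
          lam • (!![2 * a * b / (a ^ 2 + b ^ 2), -((a ^ 2 - b ^ 2) / (a ^ 2 + b ^ 2));
                    (a ^ 2 - b ^ 2) / (a ^ 2 + b ^ 2), 2 * a * b / (a ^ 2 + b ^ 2)] *
                  !![b, 0; 0, a])).det = 1) := by
  have hs : a ^ 2 + b ^ 2 ≠ 0 := by positivity
  constructor
  · intro lam
    funext i
    fin_cases i <;>
    · simp [Matrix.mulVec, Matrix.mul_apply, Fin.sum_univ_two, dotProduct]
      field_simp
      ring
  · intro hab lam _
    rw [Matrix.det_fin_two]
    simp [Matrix.mul_apply, Fin.sum_univ_two]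
    field_simp
    nlinarith [sq_nonneg (a - b), sq_nonneg (a + b), hab]
end

section
/- Let A ∈ SO(2)·diag(a,b) and B ∈ SO(2)·diag(a,b) (the same well, a, b > 0) with B - A = c ⊗ (1,1)ᵀ for some c ∈ ℝ². Then c = 0 and B = A. -/
set_option maxHeartbeats 1000000
open Matrix

theorem same_well_twin_normal_trivial (a b : ℝ) (ha : 0 < a) (hb : 0 < b)
    (A B : Matrix (Fin 2) (Fin 2) ℝ)
    (hA : ∃ Q, SO2 Q ∧ A = Q * !![a, 0; 0, b])
    (hB : ∃ Q, SO2 Q ∧ B = Q * !![a, 0; 0, b])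
    (c : Fin 2 → ℝ) (h : B - A = vecMulVec c ![1, 1]) :
    c = 0 ∧ B = A := by
  obtain ⟨Q, ⟨hQo, hQd⟩, rfl⟩ := hA
  obtain ⟨R, ⟨hRo, hRd⟩, rfl⟩ := hB
  have hQ1 : Q 0 0 ^ 2 + Q 1 0 ^ 2 = 1 := by
    have := congrFun (congrFun hQo 0) 0
    simp [Matrix.mul_apply, Fin.sum_univ_two, Matrix.one_apply, Matrix.transpose_apply] at this
    nlinarith [this]
  have hQ2 : Q 0 1 ^ 2 + Q 1 1 ^ 2 = 1 := by
    have := congrFun (congrFun hQo 1) 1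
    simp [Matrix.mul_apply, Fin.sum_univ_two, Matrix.one_apply, Matrix.transpose_apply] at this
    nlinarith [this]
  have hQd' : Q 0 0 * Q 1 1 - Q 0 1 * Q 1 0 = 1 := by
    rw [Matrix.det_fin_two] at hQd; linarith
  have hQs : Q 1 1 = Q 0 0 := by nlinarith [sq_nonneg (Q 0 0 - Q 1 1), sq_nonneg (Q 0 1 + Q 1 0)]
  have hQq : Q 0 1 = -Q 1 0 := by nlinarith [sq_nonneg (Q 0 0 - Q 1 1), sq_nonneg (Q 0 1 + Q 1 0)]
  have hR1 : R 0 0 ^ 2 + R 1 0 ^ 2 = 1 := by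
    have := congrFun (congrFun hRo 0) 0
    simp [Matrix.mul_apply, Fin.sum_univ_two, Matrix.one_apply, Matrix.transpose_apply] at this
    nlinarith [this]
  have hR2 : R 0 1 ^ 2 + R 1 1 ^ 2 = 1 := by
    have := congrFun (congrFun hRo 1) 1
    simp [Matrix.mul_apply, Fin.sum_univ_two, Matrix.one_apply, Matrix.transpose_apply] at this
    nlinarith [this]
  have hRd' : R 0 0 * R 1 1 - R 0 1 * R 1 0 = 1 := by
    rw [Matrix.det_fin_two] at hRd; linarith
  have hRs : R 1 1 = R 0 0 := by nlinarith [sq_nonneg (R 0 0 - R 1 1), sq_nonneg (R 0 1 + R 1 0)]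
  have hRq : R 0 1 = -R 1 0 := by nlinarith [sq_nonneg (R 0 0 - R 1 1), sq_nonneg (R 0 1 + R 1 0)]
  have e00 := congrFun (congrFun h 0) 0
  have e01 := congrFun (congrFun h 0) 1
  have e10 := congrFun (congrFun h 1) 0
  have e11 := congrFun (congrFun h 1) 1
  simp [Matrix.sub_apply, Matrix.mul_apply, Fin.sum_univ_two, Matrix.vecMulVec_apply] at e00 e01 e10 e11
  -- e00 : R 0 0 * a - Q 0 0 * a = c 0, etc.
  have key1 : a * (R 0 0 - Q 0 0) = -b * (R 1 0 - Q 1 0) := by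
    rw [hRq, hQq] at e01; linarith
  have key2 : a * (R 1 0 - Q 1 0) = b * (R 0 0 - Q 0 0) := by
    rw [hRs, hQs] at e11; linarith
  have hp : (0:ℝ) < a ^ 2 + b ^ 2 := by positivity
  have hu : R 0 0 = Q 0 0 := by
    have h2 : (a ^ 2 + b ^ 2) * (R 0 0 - Q 0 0) = 0 := by linear_combination a * key1 - b * key2
    rcases mul_eq_zero.mp h2 with h' | h'
    · linarith
    · linarith
  have hv : R 1 0 = Q 1 0 := by
    have h2 : a * (R 1 0 - Q 1 0) = 0 := by rw [key2, hu]; ring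
    rcases mul_eq_zero.mp h2 with h' | h'
    · linarith
    · linarith
  have hRQ : R = Q := by
    ext i j
    fin_cases i <;> fin_cases j <;> simp [hu, hv, hRs, hRq, hQs, hQq]
  constructor
  · funext i
    fin_cases i
    · simpa [hRQ] using e00.symm
    · simpa [hRQ] using e10.symm
  · rw [hRQ]
end
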